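/- arXiv:2102.03977 — 2 statements merged into one kernel-verified Lean document; each statement's English description precedes it below -/
import Mathlib

section
/- Let V be a finite set of n ≥ 3 nodes, let k ≥ 1 be an integer, let C* ⊆ V be a ground-truth cluster with |C*| ≥ n/k, and let A ⊆ C* be nonempty with |A| = β·|C*| (the nodes of C* having the majority feature value, so that C* has homogeneity β with respect to that feature). Draw a random subset S ⊆ V by Bernoulli sampling with rate p = m/n, where m is an integer with (12·k/(β·ε²))·ln n ≤ m ≤ n and 0 < ε ≤ 1. Then with probability at least 1 − 4/n, one has C* ∩ S ≠ ∅ and β·(1 − ε) ≤ |A ∩ S| / |C* ∩ S| ≤ β·(1 + 2ε). -/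
set_option maxHeartbeats 1000000

/-- The probability that the Bernoulli-`p` random subset of the finite type `V`
(each node included independently with probability `p`) equals `S`. -/
noncomputable def bernoulliWeight {V : Type*} [Fintype V] [DecidableEq V]
    (p : ℝ) (S : Finset V) : ℝ :=
  p ^ S.card * (1 - p) ^ (Fintype.card V - S.card)

open Classical in
/-- Probability of the event `A` under Bernoulli-`p` sampling of a subset of `V`. -/
noncomputable def prEvent {V : Type*} [Fintype V] [DecidableEq V]
    (p : ℝ) (A : Finset V → Prop) : ℝ :=
  ∑ S : Finset V, if A S then bernoulliWeight p S else 0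

lemma bw_nonneg {V : Type*} [Fintype V] [DecidableEq V] {p : ℝ}
    (hp0 : 0 ≤ p) (hp1 : p ≤ 1) (S : Finset V) : 0 ≤ bernoulliWeight p S := by
  unfold bernoulliWeight
  have : (0:ℝ) ≤ 1 - p := by linarith
  positivity

lemma sum_bw_mul_pow {V : Type*} [Fintype V] [DecidableEq V] (p r : ℝ) (W : Finset V) :
    ∑ S : Finset V, bernoulliWeight p S * r ^ (W ∩ S).card
      = (p * r + (1 - p)) ^ W.card := by
  have key := Finset.prod_add (fun v : V => p * (if v ∈ W then r else 1))
      (fun _ : V => (1 - p)) (Finset.univ : Finset V)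
  have term : ∀ t : Finset V,
      (∏ v ∈ t, p * (if v ∈ W then r else 1)) * (∏ _v ∈ Finset.univ \ t, (1 - p))
        = bernoulliWeight p t * r ^ (W ∩ t).card := by
    intro t
    rw [Finset.prod_mul_distrib, Finset.prod_const, Finset.prod_ite_mem,
      Finset.prod_const, Finset.prod_const, ← Finset.compl_eq_univ_sdiff,
      Finset.card_compl, Finset.inter_comm, bernoulliWeight]
    ring
  have lhs : (∏ v : V, (p * (if v ∈ W then r else 1) + (1 - p)))
      = (p * r + (1 - p)) ^ W.card := by
    have h : ∀ v : V, p * (if v ∈ W then r else 1) + (1 - p)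
        = (if v ∈ W then (p * r + (1 - p)) else 1) := by
      intro v; split_ifs <;> ring
    simp_rw [h]
    rw [Finset.prod_ite_mem, Finset.univ_inter, Finset.prod_const]
  calc ∑ S : Finset V, bernoulliWeight p S * r ^ (W ∩ S).card
      = ∑ t ∈ (Finset.univ : Finset V).powerset,
          (∏ v ∈ t, p * (if v ∈ W then r else 1)) * (∏ _v ∈ Finset.univ \ t, (1 - p)) := by
        rw [Finset.powerset_univ]
        exact Finset.sum_congr rfl (fun t _ => (term t).symm)
    _ = (p * r + (1 - p)) ^ W.card := by rw [← key, lhs]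

lemma sum_bw {V : Type*} [Fintype V] [DecidableEq V] (p : ℝ) :
    ∑ S : Finset V, bernoulliWeight p S = 1 := by
  have h := sum_bw_mul_pow (V := V) p 1 ∅
  simpa using h

open Real in
/-- MGF-style bound: for `0 ≤ u` sign-free, if `p*exp u + (1-p) ≥ 0` then
`∑ bw * (exp u)^X = (p e^u + q)^M ≤ exp (p M (e^u - 1))`. -/
lemma mgf_le {V : Type*} [Fintype V] [DecidableEq V] {p : ℝ}
    (hp0 : 0 ≤ p) (hp1 : p ≤ 1) (W : Finset V) (u : ℝ) :
    ∑ S : Finset V, bernoulliWeight p S * Real.exp u ^ (W ∩ S).card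
      ≤ Real.exp (p * W.card * (Real.exp u - 1)) := by
  rw [sum_bw_mul_pow]
  have hbase0 : (0:ℝ) ≤ p * Real.exp u + (1 - p) := by
    have := Real.exp_pos u
    nlinarith
  have hbase : p * Real.exp u + (1 - p) ≤ Real.exp (p * (Real.exp u - 1)) := by
    have := Real.add_one_le_exp (p * (Real.exp u - 1))
    linarith
  calc (p * Real.exp u + (1 - p)) ^ W.card
      ≤ (Real.exp (p * (Real.exp u - 1))) ^ W.card := pow_le_pow_left₀ hbase0 hbase _
    _ = Real.exp (p * W.card * (Real.exp u - 1)) := by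
        rw [← Real.exp_nat_mul]; ring_nf

lemma prEvent_tail_le {V : Type*} [Fintype V] [DecidableEq V] {p : ℝ}
    (hp0 : 0 ≤ p) (hp1 : p ≤ 1) (W : Finset V) (t c : ℝ) (hc : 0 ≤ c) :
    prEvent p (fun S => ((W ∩ S).card : ℝ) ≤ t)
      ≤ Real.exp (c * t + p * W.card * (Real.exp (-c) - 1)) := by
  classical
  have step : prEvent p (fun S => ((W ∩ S).card : ℝ) ≤ t)
      ≤ ∑ S : Finset V, Real.exp (c * t) * (bernoulliWeight p S * Real.exp (-c) ^ (W ∩ S).card) := by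
    unfold prEvent
    apply Finset.sum_le_sum
    intro S _
    have hbw := bw_nonneg hp0 hp1 S
    have hterm : (0:ℝ) ≤ Real.exp (c * t) * (bernoulliWeight p S * Real.exp (-c) ^ (W ∩ S).card) := by
      positivity
    split_ifs with h
    · have : Real.exp (c * t) * Real.exp (-c) ^ (W ∩ S).card
          = Real.exp (c * (t - ((W ∩ S).card : ℝ))) := by
        rw [← Real.exp_nat_mul, ← Real.exp_add]
        ring_nf
      have h1 : (1:ℝ) ≤ Real.exp (c * t) * Real.exp (-c) ^ (W ∩ S).card := by
        rw [this]
        have : 0 ≤ c * (t - ((W ∩ S).card : ℝ)) := by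
          have := sub_nonneg.mpr h
          positivity
        calc (1:ℝ) = Real.exp 0 := (Real.exp_zero).symm
          _ ≤ _ := Real.exp_le_exp.mpr this
      nlinarith
    · exact hterm
  calc prEvent p (fun S => ((W ∩ S).card : ℝ) ≤ t)
      ≤ ∑ S : Finset V, Real.exp (c * t) * (bernoulliWeight p S * Real.exp (-c) ^ (W ∩ S).card) := step
    _ = Real.exp (c * t) * ∑ S : Finset V, bernoulliWeight p S * Real.exp (-c) ^ (W ∩ S).card := by
        rw [Finset.mul_sum]
    _ ≤ Real.exp (c * t) * Real.exp (p * W.card * (Real.exp (-c) - 1)) := by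
        have := mgf_le hp0 hp1 W (-c)
        have h0 : (0:ℝ) < Real.exp (c * t) := Real.exp_pos _
        nlinarith [this]
    _ = Real.exp (c * t + p * W.card * (Real.exp (-c) - 1)) := (Real.exp_add _ _).symm

lemma prEvent_tail_ge {V : Type*} [Fintype V] [DecidableEq V] {p : ℝ}
    (hp0 : 0 ≤ p) (hp1 : p ≤ 1) (W : Finset V) (t c : ℝ) (hc : 0 ≤ c) :
    prEvent p (fun S => t ≤ ((W ∩ S).card : ℝ))
      ≤ Real.exp (-(c * t) + p * W.card * (Real.exp c - 1)) := by
  classical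
  have step : prEvent p (fun S => t ≤ ((W ∩ S).card : ℝ))
      ≤ ∑ S : Finset V, Real.exp (-(c * t)) * (bernoulliWeight p S * Real.exp c ^ (W ∩ S).card) := by
    unfold prEvent
    apply Finset.sum_le_sum
    intro S _
    have hbw := bw_nonneg hp0 hp1 S
    have hterm : (0:ℝ) ≤ Real.exp (-(c * t)) * (bernoulliWeight p S * Real.exp c ^ (W ∩ S).card) := by
      positivity
    split_ifs with h
    · have heq : Real.exp (-(c * t)) * Real.exp c ^ (W ∩ S).card
          = Real.exp (c * (((W ∩ S).card : ℝ) - t)) := by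
        rw [← Real.exp_nat_mul, ← Real.exp_add]
        ring_nf
      have h1 : (1:ℝ) ≤ Real.exp (-(c * t)) * Real.exp c ^ (W ∩ S).card := by
        rw [heq]
        have : 0 ≤ c * (((W ∩ S).card : ℝ) - t) := by
          have := sub_nonneg.mpr h
          positivity
        calc (1:ℝ) = Real.exp 0 := (Real.exp_zero).symm
          _ ≤ _ := Real.exp_le_exp.mpr this
      nlinarith
    · exact hterm
  calc prEvent p (fun S => t ≤ ((W ∩ S).card : ℝ))
      ≤ ∑ S : Finset V, Real.exp (-(c * t)) * (bernoulliWeight p S * Real.exp c ^ (W ∩ S).card) := step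
    _ = Real.exp (-(c * t)) * ∑ S : Finset V, bernoulliWeight p S * Real.exp c ^ (W ∩ S).card := by
        rw [Finset.mul_sum]
    _ ≤ Real.exp (-(c * t)) * Real.exp (p * W.card * (Real.exp c - 1)) := by
        have := mgf_le hp0 hp1 W c
        have h0 : (0:ℝ) < Real.exp (-(c * t)) := Real.exp_pos _
        nlinarith [this]
    _ = Real.exp (-(c * t) + p * W.card * (Real.exp c - 1)) := (Real.exp_add _ _).symm

lemma exp_quad_ub {x : ℝ} (h0 : 0 ≤ x) (h1 : x ≤ 1) :
    Real.exp x ≤ 1 + x + (13/18) * x ^ 2 := by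
  have h := Real.exp_bound' h0 h1 (n := 3) (by norm_num)
  norm_num [Finset.sum_range_succ, Nat.factorial] at h
  have hx3 : x ^ 3 ≤ x ^ 2 := by nlinarith
  nlinarith

lemma exp_neg_quad_ub {x : ℝ} (h0 : 0 ≤ x) (h1 : x ≤ 1) :
    Real.exp (-x) ≤ 1 - x + (13/18) * x ^ 2 := by
  have habs : |(-x)| ≤ 1 := by rw [abs_neg, abs_of_nonneg h0]; exact h1
  have h := Real.exp_bound habs (n := 3) (by norm_num)
  rw [abs_neg, abs_of_nonneg h0] at h
  norm_num [Finset.sum_range_succ, Nat.factorial] at h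
  have h2 := (abs_sub_le_iff.mp h).1
  have hx3 : x ^ 3 ≤ x ^ 2 := by nlinarith
  nlinarith

lemma chernoff_ub {V : Type*} [Fintype V] [DecidableEq V] {p : ℝ}
    (hp0 : 0 ≤ p) (hp1 : p ≤ 1) (W : Finset V) {δ : ℝ} (hδ0 : 0 < δ) (hδ1 : δ ≤ 1) :
    prEvent p (fun S => (1 + δ) * (p * (W.card : ℝ)) ≤ ((W ∩ S).card : ℝ))
      ≤ Real.exp (-(9/26 * δ ^ 2 * (p * (W.card : ℝ)))) := by
  have hc0 : (0:ℝ) ≤ 9 * δ / 13 := by positivity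
  have hc1 : 9 * δ / 13 ≤ 1 := by linarith
  refine le_trans (prEvent_tail_ge hp0 hp1 W _ (9 * δ / 13) hc0) ?_
  apply Real.exp_le_exp.mpr
  have hE := exp_quad_ub hc0 hc1
  have hμ : (0:ℝ) ≤ p * W.card := by positivity
  nlinarith [mul_le_mul_of_nonneg_left hE hμ]

lemma chernoff_lb {V : Type*} [Fintype V] [DecidableEq V] {p : ℝ}
    (hp0 : 0 ≤ p) (hp1 : p ≤ 1) (W : Finset V) {δ : ℝ} (hδ0 : 0 < δ) (hδ1 : δ ≤ 1) :
    prEvent p (fun S => ((W ∩ S).card : ℝ) ≤ (1 - δ) * (p * (W.card : ℝ)))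
      ≤ Real.exp (-(9/26 * δ ^ 2 * (p * (W.card : ℝ)))) := by
  have hc0 : (0:ℝ) ≤ 9 * δ / 13 := by positivity
  have hc1 : 9 * δ / 13 ≤ 1 := by linarith
  refine le_trans (prEvent_tail_le hp0 hp1 W _ (9 * δ / 13) hc0) ?_
  apply Real.exp_le_exp.mpr
  have hE := exp_neg_quad_ub hc0 hc1
  have hμ : (0:ℝ) ≤ p * W.card := by positivity
  nlinarith [mul_le_mul_of_nonneg_left hE hμ]

open Classical in
lemma one_le_prEvent_add {V : Type*} [Fintype V] [DecidableEq V] {p : ℝ}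
    (hp0 : 0 ≤ p) (hp1 : p ≤ 1) (P Q : Finset V → Prop)
    (h : ∀ S, P S ∨ Q S) :
    1 ≤ prEvent p P + prEvent p Q := by
  unfold prEvent
  rw [← sum_bw (V := V) p, ← Finset.sum_add_distrib]
  apply Finset.sum_le_sum
  intro S _
  have hbw := bw_nonneg hp0 hp1 S
  split_ifs with h1 h2 <;> first | linarith | (rcases h S with h' | h' <;> tauto)

open Classical in
lemma prEvent_or_le {V : Type*} [Fintype V] [DecidableEq V] {p : ℝ}
    (hp0 : 0 ≤ p) (hp1 : p ≤ 1) (P Q : Finset V → Prop) :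
    prEvent p (fun S => P S ∨ Q S) ≤ prEvent p P + prEvent p Q := by
  unfold prEvent
  rw [← Finset.sum_add_distrib]
  apply Finset.sum_le_sum
  intro S _
  have hbw := bw_nonneg hp0 hp1 S
  split_ifs <;> first | linarith | tauto

open Classical in
lemma prEvent_mono {V : Type*} [Fintype V] [DecidableEq V] {p : ℝ}
    (hp0 : 0 ≤ p) (hp1 : p ≤ 1) {P Q : Finset V → Prop}
    (h : ∀ S, P S → Q S) :
    prEvent p P ≤ prEvent p Q := by
  unfold prEvent
  apply Finset.sum_le_sum
  intro S _
  have hbw := bw_nonneg hp0 hp1 S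
  split_ifs with h1 h2 <;> first | linarith | exact absurd (h S h1) h2

lemma ratio_good {β ε μX x y : ℝ} (hβ0 : 0 < β) (hε0 : 0 < ε) (hε1 : ε ≤ 1)
    (hμX : 0 < μX) (hB1 : (1 - ε/2) * (β * μX) < y) (hB2 : y < (1 + ε/2) * (β * μX))
    (hB3 : (1 - ε/2) * μX < x) (hB4 : x < (1 + ε/2) * μX) :
    0 < x ∧ β * (1 - ε) ≤ y / x ∧ y / x ≤ β * (1 + 2 * ε) := by
  have hx_pos : 0 < x := by nlinarith
  refine ⟨hx_pos, ?_, ?_⟩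
  · rw [le_div_iff₀ hx_pos]
    have hb4' : β * (1 - ε) * x ≤ β * (1 - ε) * ((1 + ε/2) * μX) :=
      mul_le_mul_of_nonneg_left hB4.le (by nlinarith)
    have hmid : β * (1 - ε) * ((1 + ε/2) * μX) ≤ (1 - ε/2) * (β * μX) := by
      nlinarith [mul_nonneg (mul_nonneg hβ0.le hμX.le) (sq_nonneg ε)]
    linarith
  · rw [div_le_iff₀ hx_pos]
    have hb3' : β * (1 + 2 * ε) * ((1 - ε/2) * μX) ≤ β * (1 + 2 * ε) * x :=
      mul_le_mul_of_nonneg_left hB3.le (by nlinarith)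
    have heps : (0:ℝ) ≤ ε - ε^2 := by nlinarith
    have hmid : (1 + ε/2) * (β * μX) ≤ β * (1 + 2 * ε) * ((1 - ε/2) * μX) := by
      nlinarith [mul_nonneg (mul_nonneg hβ0.le hμX.le) heps]
    linarith

lemma exp_tail_num {ε μ L : ℝ} (hε0 : 0 < ε) (h12 : 12 * L ≤ ε ^ 2 * μ) (hL : 1 ≤ L) :
    L ≤ 9/26 * (ε/2) ^ 2 * μ := by nlinarith

/-- Lemma 3, ω_IC: for a cluster `C*` with `|C*| ≥ n/k` of
homogeneity `β` (i.e. `|A| = β·|C*|` for the majority feature class `A ⊆ C*`),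
sampling at rate `p = m/n` with `(12k/(βε²))·ln n ≤ m ≤ n` yields, with
probability at least `1 − 4/n`, a sampled homogeneity in `[β(1−ε), β(1+2ε)]`. -/
theorem stmt_5 {V : Type*} [Fintype V] [DecidableEq V]
    (n : ℕ) (hn : Fintype.card V = n) (hn3 : 3 ≤ n)
    (k : ℕ) (hk : 1 ≤ k)
    (Cstar A : Finset V) (hCsize : (n : ℝ) / k ≤ (Cstar.card : ℝ))
    (hA : A.Nonempty) (hAC : A ⊆ Cstar)
    (β : ℝ) (hβ : (A.card : ℝ) = β * (Cstar.card : ℝ))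
    (ε : ℝ) (hε0 : 0 < ε) (hε1 : ε ≤ 1)
    (m : ℕ) (hm₁ : (12 * k / (β * ε ^ 2)) * Real.log n ≤ (m : ℝ)) (hm₂ : m ≤ n) :
    1 - 4 / (n : ℝ) ≤
      prEvent ((m : ℝ) / n) (fun S => (Cstar ∩ S).Nonempty ∧
        β * (1 - ε) ≤ ((A ∩ S).card : ℝ) / (((Cstar ∩ S).card : ℝ)) ∧
        ((A ∩ S).card : ℝ) / (((Cstar ∩ S).card : ℝ)) ≤ β * (1 + 2 * ε)) := by
  -- basic positivity facts
  have hn0 : (0:ℝ) < n := by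
    have : (3:ℝ) ≤ n := by exact_mod_cast hn3
    linarith
  have hk0 : (0:ℝ) < k := by exact_mod_cast hk
  have hc0 : (0:ℝ) < Cstar.card := lt_of_lt_of_le (by positivity) hCsize
  have ha1 : (1:ℝ) ≤ A.card := by exact_mod_cast hA.card_pos
  have hβ0 : 0 < β := by nlinarith
  have hβ1 : β ≤ 1 := by
    have h := Finset.card_le_card hAC
    have h' : (A.card:ℝ) ≤ Cstar.card := by exact_mod_cast h
    nlinarith
  have hlogn : 1 ≤ Real.log n := by
    have he : Real.exp 1 < (n:ℝ) := by
      have h1 : Real.exp 1 < 2.7182818286 := Real.exp_one_lt_d9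
      have h2 : (3:ℝ) ≤ n := by exact_mod_cast hn3
      nlinarith
    exact le_of_lt ((Real.lt_log_iff_exp_lt hn0).mpr he)
  have hm0 : (0:ℝ) < m := by
    have hpos : 0 < (12 * k / (β * ε ^ 2)) * Real.log n := by
      have h1 : 0 < 12 * (k:ℝ) / (β * ε ^ 2) := by positivity
      nlinarith
    linarith
  set p : ℝ := (m : ℝ) / n with hp_def
  have hp_pos : 0 < p := by positivity
  have hp0 : 0 ≤ p := hp_pos.le
  have hp1 : p ≤ 1 := by
    rw [hp_def, div_le_one hn0]
    exact_mod_cast hm₂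
  set μX : ℝ := p * (Cstar.card : ℝ) with hμX_def
  set μY : ℝ := p * (A.card : ℝ) with hμY_def
  have hμY_eq : μY = β * μX := by rw [hμY_def, hμX_def, hβ]; ring
  have hμX_pos : 0 < μX := mul_pos hp_pos hc0
  have hμY_pos : 0 < μY := mul_pos hp_pos (by linarith)
  -- key bound: ε² μY ≥ 12 log n
  have h1 : (m:ℝ) / k ≤ μX := by
    have := mul_le_mul_of_nonneg_left hCsize hp0
    calc (m:ℝ)/k = p * ((n:ℝ)/k) := by rw [hp_def]; field_simp
      _ ≤ p * Cstar.card := this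
  have keyY : 12 * Real.log n ≤ ε ^ 2 * μY := by
    have h2 : 12 * Real.log n ≤ (β * ε ^ 2 / k) * m := by
      have hq : 0 < β * ε ^ 2 / (k:ℝ) := by positivity
      have := mul_le_mul_of_nonneg_left hm₁ hq.le
      calc 12 * Real.log n
          = (β * ε ^ 2 / k) * ((12 * k / (β * ε ^ 2)) * Real.log n) := by
            field_simp
        _ ≤ (β * ε ^ 2 / k) * m := this
    calc 12 * Real.log n ≤ (β * ε ^ 2 / k) * m := h2
      _ = (β * ε ^ 2) * ((m:ℝ)/k) := by ring
      _ ≤ (β * ε ^ 2) * μX := mul_le_mul_of_nonneg_left h1 (by positivity)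
      _ = ε ^ 2 * μY := by rw [hμY_eq]; ring
  have keyX : 12 * Real.log n ≤ ε ^ 2 * μX := by
    have : ε ^ 2 * μY ≤ ε ^ 2 * μX := by nlinarith
    linarith
  -- each tail ≤ 1/n
  set δ : ℝ := ε / 2 with hδ_def
  have hδ0 : 0 < δ := by positivity
  have hδ1 : δ ≤ 1 := by rw [hδ_def]; linarith
  have hexp_le : ∀ μ : ℝ, 12 * Real.log n ≤ ε ^ 2 * μ →
      Real.exp (-(9/26 * δ ^ 2 * μ)) ≤ 1 / n := by
    intro μ hμ
    have h1 : Real.log n ≤ 9/26 * δ ^ 2 * μ := by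
      rw [hδ_def]
      exact exp_tail_num hε0 hμ hlogn
    calc Real.exp (-(9/26 * δ ^ 2 * μ)) ≤ Real.exp (-(Real.log n)) :=
          Real.exp_le_exp.mpr (by linarith)
      _ = 1 / n := by rw [Real.exp_neg, Real.exp_log hn0, one_div]
  have tailB1 : prEvent p (fun S => ((A ∩ S).card : ℝ) ≤ (1 - δ) * μY) ≤ 1 / n :=
    le_trans (chernoff_lb hp0 hp1 A hδ0 hδ1) (hexp_le _ keyY)
  have tailB2 : prEvent p (fun S => (1 + δ) * μY ≤ ((A ∩ S).card : ℝ)) ≤ 1 / n :=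
    le_trans (chernoff_ub hp0 hp1 A hδ0 hδ1) (hexp_le _ keyY)
  have tailB3 : prEvent p (fun S => ((Cstar ∩ S).card : ℝ) ≤ (1 - δ) * μX) ≤ 1 / n :=
    le_trans (chernoff_lb hp0 hp1 Cstar hδ0 hδ1) (hexp_le _ keyX)
  have tailB4 : prEvent p (fun S => (1 + δ) * μX ≤ ((Cstar ∩ S).card : ℝ)) ≤ 1 / n :=
    le_trans (chernoff_ub hp0 hp1 Cstar hδ0 hδ1) (hexp_le _ keyX)
  -- coverage
  have hcov : ∀ S : Finset V,
      ((Cstar ∩ S).Nonempty ∧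
        β * (1 - ε) ≤ ((A ∩ S).card : ℝ) / (((Cstar ∩ S).card : ℝ)) ∧
        ((A ∩ S).card : ℝ) / (((Cstar ∩ S).card : ℝ)) ≤ β * (1 + 2 * ε)) ∨
      (((A ∩ S).card : ℝ) ≤ (1 - δ) * μY ∨ (1 + δ) * μY ≤ ((A ∩ S).card : ℝ) ∨
        ((Cstar ∩ S).card : ℝ) ≤ (1 - δ) * μX ∨ (1 + δ) * μX ≤ ((Cstar ∩ S).card : ℝ)) := by
    intro S
    set y : ℝ := ((A ∩ S).card : ℝ) with hy_def
    set x : ℝ := ((Cstar ∩ S).card : ℝ) with hx_def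
    by_cases hB1 : y ≤ (1 - δ) * μY
    · exact Or.inr (Or.inl hB1)
    by_cases hB2 : (1 + δ) * μY ≤ y
    · exact Or.inr (Or.inr (Or.inl hB2))
    by_cases hB3 : x ≤ (1 - δ) * μX
    · exact Or.inr (Or.inr (Or.inr (Or.inl hB3)))
    by_cases hB4 : (1 + δ) * μX ≤ x
    · exact Or.inr (Or.inr (Or.inr (Or.inr hB4)))
    push_neg at hB1 hB2 hB3 hB4
    left
    rw [hμY_eq, hδ_def] at hB1 hB2
    rw [hδ_def] at hB3 hB4
    obtain ⟨hx_pos, hlo, hhi⟩ := ratio_good hβ0 hε0 hε1 hμX_pos hB1 hB2 hB3 hB4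
    have hne : (Cstar ∩ S).Nonempty := by
      rw [← Finset.card_pos]
      exact Nat.cast_pos.mp hx_pos
    exact ⟨hne, hlo, hhi⟩
  -- union bound
  have hone := one_le_prEvent_add hp0 hp1 _ _ hcov
  have hsplit :
      prEvent p (fun S => ((A ∩ S).card : ℝ) ≤ (1 - δ) * μY ∨ (1 + δ) * μY ≤ ((A ∩ S).card : ℝ) ∨
        ((Cstar ∩ S).card : ℝ) ≤ (1 - δ) * μX ∨ (1 + δ) * μX ≤ ((Cstar ∩ S).card : ℝ))
      ≤ 4 / n := by
    calc prEvent p (fun S => ((A ∩ S).card : ℝ) ≤ (1 - δ) * μY ∨ (1 + δ) * μY ≤ ((A ∩ S).card : ℝ) ∨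
          ((Cstar ∩ S).card : ℝ) ≤ (1 - δ) * μX ∨ (1 + δ) * μX ≤ ((Cstar ∩ S).card : ℝ))
        ≤ prEvent p (fun S => ((A ∩ S).card : ℝ) ≤ (1 - δ) * μY) +
          prEvent p (fun S => (1 + δ) * μY ≤ ((A ∩ S).card : ℝ) ∨
            ((Cstar ∩ S).card : ℝ) ≤ (1 - δ) * μX ∨ (1 + δ) * μX ≤ ((Cstar ∩ S).card : ℝ)) :=
          prEvent_or_le hp0 hp1 _ _
      _ ≤ prEvent p (fun S => ((A ∩ S).card : ℝ) ≤ (1 - δ) * μY) +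
          (prEvent p (fun S => (1 + δ) * μY ≤ ((A ∩ S).card : ℝ)) +
            prEvent p (fun S => ((Cstar ∩ S).card : ℝ) ≤ (1 - δ) * μX ∨
              (1 + δ) * μX ≤ ((Cstar ∩ S).card : ℝ))) := by
          have := prEvent_or_le hp0 hp1 (fun S => (1 + δ) * μY ≤ ((A ∩ S).card : ℝ))
            (fun S => ((Cstar ∩ S).card : ℝ) ≤ (1 - δ) * μX ∨ (1 + δ) * μX ≤ ((Cstar ∩ S).card : ℝ))
          linarith
      _ ≤ prEvent p (fun S => ((A ∩ S).card : ℝ) ≤ (1 - δ) * μY) +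
          (prEvent p (fun S => (1 + δ) * μY ≤ ((A ∩ S).card : ℝ)) +
            (prEvent p (fun S => ((Cstar ∩ S).card : ℝ) ≤ (1 - δ) * μX) +
              prEvent p (fun S => (1 + δ) * μX ≤ ((Cstar ∩ S).card : ℝ)))) := by
          have := prEvent_or_le hp0 hp1 (fun S => ((Cstar ∩ S).card : ℝ) ≤ (1 - δ) * μX)
            (fun S => (1 + δ) * μX ≤ ((Cstar ∩ S).card : ℝ))
          linarith
      _ ≤ 4 / n := by
          have h4 : (4:ℝ)/n = 1/n + (1/n + (1/n + 1/n)) := by ring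
          rw [h4]
          gcongr
  linarith
end

section
/- Let (V,d) be a finite metric space, let 𝒫 = {C₁*, …, C_k*} be a partition of V into k nonempty blocks, let W ⊆ V be nonempty, and suppose 𝒫 satisfies the margin property on W. Define a merge step on partitions of W: 𝒟 → 𝒟' if 𝒟' is obtained from 𝒟 by replacing two distinct blocks D₁, D₂ of 𝒟 that minimize the complete-linkage distance over all pairs of distinct blocks of 𝒟 by the single block D₁ ∪ D₂. Let k' be the number of indices i with C_i* ∩ W ≠ ∅. Then: (a) every partition of W reachable from the partition of W into singletons by a finite sequence of merge steps, and having at least k' blocks, refines {C_i* ∩ W : C_i* ∩ W ≠ ∅}; and (b) every partition of W reachable from the singleton partition by merge steps and having exactly k' blocks equals {C_i* ∩ W : C_i* ∩ W ≠ ∅}. -/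
/-- `P` is a partition of the finite set `W` into nonempty blocks. -/
def IsPartitionOn {V : Type*} [DecidableEq V] (W : Finset V)
    (P : Finset (Finset V)) : Prop :=
  (∀ B ∈ P, B.Nonempty) ∧ (∀ B ∈ P, B ⊆ W) ∧
  (∀ B₁ ∈ P, ∀ B₂ ∈ P, B₁ ≠ B₂ → Disjoint B₁ B₂) ∧
  (∀ v ∈ W, ∃ B ∈ P, v ∈ B)

/-- The partition `P` satisfies the margin property on `W`: any two distinct
points of `W` in the same block of `P` are strictly closer than any two points
of `W` lying in two distinct blocks of `P`. -/
def MarginOn {V : Type*} [MetricSpace V] (P : Finset (Finset V))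
    (W : Finset V) : Prop :=
  ∀ u ∈ W, ∀ v ∈ W, ∀ x ∈ W, ∀ y ∈ W,
    u ≠ v → (∃ B ∈ P, u ∈ B ∧ v ∈ B) →
    (∃ B₁ ∈ P, ∃ B₂ ∈ P, B₁ ≠ B₂ ∧ x ∈ B₁ ∧ y ∈ B₂) →
    dist u v < dist x y

/-- Complete-linkage distance between two finite sets of points:
`d(D₁,D₂) = max_{u ∈ D₁, v ∈ D₂} d(u,v)`. -/
noncomputable def clDist {V : Type*} [MetricSpace V] (D₁ D₂ : Finset V) : ℝ :=
  sSup {r : ℝ | ∃ u ∈ D₁, ∃ v ∈ D₂, r = dist u v}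

/-- `D` refines `Q`: every block of `D` is contained in some block of `Q`. -/
def Refines {V : Type*} (D Q : Finset (Finset V)) : Prop :=
  ∀ B ∈ D, ∃ B' ∈ Q, B ⊆ B'

/-- The restriction of the partition `P` to `W`:
the nonempty sets among `{C ∩ W : C ∈ P}`. -/
def restrictPartition {V : Type*} [DecidableEq V] (P : Finset (Finset V))
    (W : Finset V) : Finset (Finset V) :=
  (P.image (fun C => C ∩ W)).filter Finset.Nonempty

/-- A single closest-pair merge step: replace two distinct blocks `D₁, D₂`
minimizing the complete-linkage distance by their union. -/
def MergeStep {V : Type*} [MetricSpace V] [DecidableEq V]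
    (D D' : Finset (Finset V)) : Prop :=
  ∃ D₁ ∈ D, ∃ D₂ ∈ D, D₁ ≠ D₂ ∧
    (∀ E₁ ∈ D, ∀ E₂ ∈ D, E₁ ≠ E₂ → clDist D₁ D₂ ≤ clDist E₁ E₂) ∧
    D' = insert (D₁ ∪ D₂) ((D.erase D₁).erase D₂)


lemma clDist_set_eq {V : Type*} [MetricSpace V] [DecidableEq V] (D₁ D₂ : Finset V) :
    {r : ℝ | ∃ u ∈ D₁, ∃ v ∈ D₂, r = dist u v}
      = ↑((D₁ ×ˢ D₂).image fun p => dist p.1 p.2) := by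
  ext r
  simp only [Set.mem_setOf_eq, Finset.coe_image, Set.mem_image, Finset.mem_coe,
    Finset.mem_product]
  constructor
  · rintro ⟨u, hu, v, hv, rfl⟩; exact ⟨(u, v), ⟨hu, hv⟩, rfl⟩
  · rintro ⟨⟨u, v⟩, ⟨hu, hv⟩, rfl⟩; exact ⟨u, hu, v, hv, rfl⟩

lemma exists_clDist_eq {V : Type*} [MetricSpace V] {D₁ D₂ : Finset V}
    (h₁ : D₁.Nonempty) (h₂ : D₂.Nonempty) :
    ∃ u ∈ D₁, ∃ v ∈ D₂, clDist D₁ D₂ = dist u v := by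
  classical
  have hfin : ({r : ℝ | ∃ u ∈ D₁, ∃ v ∈ D₂, r = dist u v}).Finite := by
    rw [clDist_set_eq]; exact Finset.finite_toSet _
  have hne : ({r : ℝ | ∃ u ∈ D₁, ∃ v ∈ D₂, r = dist u v}).Nonempty := by
    obtain ⟨u, hu⟩ := h₁; obtain ⟨v, hv⟩ := h₂
    exact ⟨dist u v, u, hu, v, hv, rfl⟩
  exact hne.csSup_mem hfin

lemma dist_le_clDist {V : Type*} [MetricSpace V] {D₁ D₂ : Finset V} {u v : V}
    (hu : u ∈ D₁) (hv : v ∈ D₂) : dist u v ≤ clDist D₁ D₂ := by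
  classical
  have hfin : ({r : ℝ | ∃ u ∈ D₁, ∃ v ∈ D₂, r = dist u v}).Finite := by
    rw [clDist_set_eq]; exact Finset.finite_toSet _
  exact le_csSup hfin.bddAbove ⟨u, hu, v, hv, rfl⟩

/-- If two partitions of `W` satisfy `Refines D Q` and `#D ≤ #Q`, they are equal. -/
lemma refines_eq {V : Type*} [DecidableEq V] {W : Finset V} {D Q : Finset (Finset V)}
    (hD : IsPartitionOn W D) (hQ : IsPartitionOn W Q) (hr : Refines D Q)
    (hc : D.card ≤ Q.card) : D = Q := by
  classical
  obtain ⟨hDne, hDsub, hDdisj, hDcov⟩ := hD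
  obtain ⟨hQne, hQsub, hQdisj, hQcov⟩ := hQ
  set f : Finset V → Finset V := fun B =>
    if h : ∃ B' ∈ Q, B ⊆ B' then h.choose else ∅ with hf
  have hfmem : ∀ B ∈ D, f B ∈ Q ∧ B ⊆ f B := by
    intro B hB
    have h : ∃ B' ∈ Q, B ⊆ B' := hr B hB
    simp only [hf, dif_pos h]
    exact ⟨h.choose_spec.1, h.choose_spec.2⟩
  -- the Q-block containing a D-block is unique on nonempty blocks
  have key : ∀ B ∈ D, ∀ q ∈ Q, ∀ v, v ∈ B → v ∈ q → f B = q := by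
    intro B hB q hq v hvB hvq
    obtain ⟨hfQ, hBf⟩ := hfmem B hB
    by_contra hne
    exact (Finset.disjoint_left.1 (hQdisj _ hfQ _ hq hne)) (hBf hvB) hvq
  -- f is surjective from D onto Q
  have hsurj : ∀ q ∈ Q, ∃ B, ∃ _ : B ∈ D, f B = q := by
    intro q hq
    obtain ⟨v, hv⟩ := hQne q hq
    obtain ⟨B, hB, hvB⟩ := hDcov v (hQsub q hq hv)
    exact ⟨B, hB, key B hB q hq v hvB hv⟩
  have hinj := Finset.inj_on_of_surj_on_of_card_le (fun B (_ : B ∈ D) => f B)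
    (fun B hB => (hfmem B hB).1) hsurj hc
  -- Q ⊆ D
  have hQD : Q ⊆ D := by
    intro q hq
    obtain ⟨B, hB, hfB⟩ := hsurj q hq
    have hqB : q ⊆ B := by
      intro v hv
      obtain ⟨B', hB', hvB'⟩ := hDcov v (hQsub q hq hv)
      have : f B' = q := key B' hB' q hq v hvB' hv
      have : B' = B := hinj hB' hB (this.trans hfB.symm)
      exact this ▸ hvB'
    have : q = B := Finset.Subset.antisymm hqB (hfB ▸ (hfmem B hB).2)
    exact this ▸ hB
  exact (Finset.eq_of_subset_of_card_le hQD hc).symm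

/-- deterministic core of Theorems 2 and 3: under the margin
property on `W`, (a) every partition reachable from the singleton partition of
`W` by closest-pair merges with at least `k'` blocks refines the restriction of
the ground truth `P` to `W`, and (b) with exactly `k'` blocks it equals that
restriction, where `k'` is the number of ground-truth blocks meeting `W`. -/
theorem stmt_11 {V : Type*} [MetricSpace V] [Fintype V] [DecidableEq V]
    (k : ℕ) (P : Finset (Finset V))
    (hP : IsPartitionOn Finset.univ P) (hPk : P.card = k)
    (W : Finset V) (hW : W.Nonempty) (hmargin : MarginOn P W) :
    (∀ D : Finset (Finset V),
      Relation.ReflTransGen MergeStep (W.image fun v => ({v} : Finset V)) D →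
      (restrictPartition P W).card ≤ D.card →
      Refines D (restrictPartition P W)) ∧
    (∀ D : Finset (Finset V),
      Relation.ReflTransGen MergeStep (W.image fun v => ({v} : Finset V)) D →
      D.card = (restrictPartition P W).card →
      D = restrictPartition P W) := by
  classical
  obtain ⟨hPne, -, hPdisj, hPcov⟩ := hP
  set Q := restrictPartition P W with hQdef
  -- membership in Q
  have hQmem : ∀ q, q ∈ Q ↔ (∃ C ∈ P, C ∩ W = q) ∧ q.Nonempty := by
    intro q
    simp [hQdef, restrictPartition, Finset.mem_filter, Finset.mem_image]
  have hQpart : IsPartitionOn W Q := by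
    refine ⟨fun B hB => ((hQmem B).1 hB).2, fun B hB => ?_, ?_, ?_⟩
    · obtain ⟨⟨C, hC, rfl⟩, -⟩ := (hQmem B).1 hB
      exact Finset.inter_subset_right
    · intro B₁ hB₁ B₂ hB₂ hne
      obtain ⟨⟨C₁, hC₁, rfl⟩, -⟩ := (hQmem B₁).1 hB₁
      obtain ⟨⟨C₂, hC₂, rfl⟩, -⟩ := (hQmem B₂).1 hB₂
      have hCne : C₁ ≠ C₂ := fun h => hne (by rw [h])
      exact (hPdisj _ hC₁ _ hC₂ hCne).mono Finset.inter_subset_left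
        Finset.inter_subset_left
    · intro v hv
      obtain ⟨C, hC, hvC⟩ := hPcov v (Finset.mem_univ v)
      refine ⟨C ∩ W, (hQmem _).2 ⟨⟨C, hC, rfl⟩, ⟨v, Finset.mem_inter.2 ⟨hvC, hv⟩⟩⟩,
        Finset.mem_inter.2 ⟨hvC, hv⟩⟩
  -- main invariant
  have main : ∀ D : Finset (Finset V),
      Relation.ReflTransGen MergeStep (W.image fun v => ({v} : Finset V)) D →
      IsPartitionOn W D ∧ (Q.card ≤ D.card → Refines D Q) := by
    intro D hD
    induction hD with
    | refl =>
      constructor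
      · refine ⟨?_, ?_, ?_, ?_⟩
        · rintro B hB
          obtain ⟨v, -, rfl⟩ := Finset.mem_image.1 hB
          exact Finset.singleton_nonempty v
        · rintro B hB
          obtain ⟨v, hv, rfl⟩ := Finset.mem_image.1 hB
          exact Finset.singleton_subset_iff.2 hv
        · rintro B₁ hB₁ B₂ hB₂ hne
          obtain ⟨u, -, rfl⟩ := Finset.mem_image.1 hB₁
          obtain ⟨v, -, rfl⟩ := Finset.mem_image.1 hB₂
          simpa using fun h => hne (by rw [h])
        · intro v hv
          exact ⟨{v}, Finset.mem_image.2 ⟨v, hv, rfl⟩, Finset.mem_singleton_self v⟩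
      · intro _
        rintro B hB
        obtain ⟨v, hv, rfl⟩ := Finset.mem_image.1 hB
        obtain ⟨q, hq, hvq⟩ := hQpart.2.2.2 v hv
        exact ⟨q, hq, Finset.singleton_subset_iff.2 hvq⟩
    | @tail D Dn hsteps hstep ih =>
      obtain ⟨hDpart, hDref⟩ := ih
      obtain ⟨hDne, hDsub, hDdisj, hDcov⟩ := hDpart
      obtain ⟨D₁, hD₁, D₂, hD₂, h12, hmin, rfl⟩ := hstep
      have hD₂' : D₂ ∈ (D.erase D₁) := Finset.mem_erase.2 ⟨h12.symm, hD₂⟩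
      have hUnotin : D₁ ∪ D₂ ∉ (D.erase D₁).erase D₂ := by
        intro h
        have hE : D₁ ∪ D₂ ∈ D := Finset.mem_of_mem_erase (Finset.mem_of_mem_erase h)
        have hEne : D₁ ∪ D₂ ≠ D₁ :=
          (Finset.mem_erase.1 (Finset.mem_of_mem_erase h)).1
        have hdisj := hDdisj _ hE _ hD₁ hEne
        obtain ⟨v, hv⟩ := hDne _ hD₁
        exact Finset.disjoint_left.1 hdisj (Finset.mem_union_left _ hv) hv
      have hcard : (insert (D₁ ∪ D₂) ((D.erase D₁).erase D₂)).card + 1 = D.card := by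
        rw [Finset.card_insert_of_notMem hUnotin, Finset.card_erase_of_mem hD₂',
          Finset.card_erase_of_mem hD₁]
        have h2 : 2 ≤ D.card := Finset.one_lt_card.2 ⟨D₁, hD₁, D₂, hD₂, h12⟩
        omega
      have hmemNew : ∀ B ∈ insert (D₁ ∪ D₂) ((D.erase D₁).erase D₂),
          B = D₁ ∪ D₂ ∨ (B ∈ D ∧ B ≠ D₁ ∧ B ≠ D₂) := by
        intro B hB
        rcases Finset.mem_insert.1 hB with h | h
        · exact Or.inl h
        · have h1 := Finset.mem_erase.1 h
          have h2 := Finset.mem_erase.1 h1.2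
          exact Or.inr ⟨h2.2, h2.1, h1.1⟩
      constructor
      · -- new partition
        refine ⟨?_, ?_, ?_, ?_⟩
        · intro B hB
          rcases hmemNew B hB with rfl | ⟨hBD, -, -⟩
          · exact (hDne _ hD₁).mono Finset.subset_union_left
          · exact hDne _ hBD
        · intro B hB
          rcases hmemNew B hB with rfl | ⟨hBD, -, -⟩
          · exact Finset.union_subset (hDsub _ hD₁) (hDsub _ hD₂)
          · exact hDsub _ hBD
        · intro B₁ hB₁ B₂ hB₂ hne
          rcases hmemNew B₁ hB₁ with rfl | ⟨hB₁D, hn11, hn12⟩ <;>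
            rcases hmemNew B₂ hB₂ with h2 | ⟨hB₂D, hn21, hn22⟩
          · exact absurd h2.symm hne
          · exact Finset.disjoint_union_left.2
              ⟨hDdisj _ hD₁ _ hB₂D (Ne.symm hn21), hDdisj _ hD₂ _ hB₂D (Ne.symm hn22)⟩
          · subst h2
            exact (Finset.disjoint_union_left.2
              ⟨hDdisj _ hD₁ _ hB₁D (Ne.symm hn11), hDdisj _ hD₂ _ hB₁D (Ne.symm hn12)⟩).symm
          · exact hDdisj _ hB₁D _ hB₂D hne
        · intro v hv
          obtain ⟨B, hB, hvB⟩ := hDcov v hv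
          by_cases h1 : B = D₁
          · exact ⟨D₁ ∪ D₂, Finset.mem_insert_self _ _,
              Finset.mem_union_left _ (h1 ▸ hvB)⟩
          by_cases h2 : B = D₂
          · exact ⟨D₁ ∪ D₂, Finset.mem_insert_self _ _,
              Finset.mem_union_right _ (h2 ▸ hvB)⟩
          · exact ⟨B, Finset.mem_insert_of_mem
              (Finset.mem_erase.2 ⟨h2, Finset.mem_erase.2 ⟨h1, hB⟩⟩), hvB⟩
      · -- refinement
        intro hc
        have hcD : Q.card < D.card := by omega
        have href : Refines D Q := hDref hcD.le
        -- pigeonhole: two distinct blocks of D inside the same Q-block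
        set f : Finset V → Finset V := fun B =>
          if h : ∃ B' ∈ Q, B ⊆ B' then h.choose else ∅ with hf
        have hfmem : ∀ B ∈ D, f B ∈ Q ∧ B ⊆ f B := by
          intro B hB
          have h : ∃ B' ∈ Q, B ⊆ B' := href B hB
          simp only [hf, dif_pos h]
          exact ⟨h.choose_spec.1, h.choose_spec.2⟩
        obtain ⟨E₁, hE₁, E₂, hE₂, hEne, hfeq⟩ :=
          Finset.exists_ne_map_eq_of_card_lt_of_maps_to hcD (fun B hB => (hfmem B hB).1)
        -- E₁, E₂ are two distinct D-blocks inside the Q-block f E₁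
        obtain ⟨⟨C, hC, hCq⟩, -⟩ := (hQmem (f E₁)).1 (hfmem E₁ hE₁).1
        have hE₁sub : E₁ ⊆ C ∩ W := hCq ▸ (hfmem E₁ hE₁).2
        have hE₂sub : E₂ ⊆ C ∩ W := hCq ▸ hfeq ▸ (hfmem E₂ hE₂).2
        -- clDist E₁ E₂ attained at u, v in the same block C
        obtain ⟨u, hu, v, hv, hcl⟩ := exists_clDist_eq (hDne _ hE₁) (hDne _ hE₂)
        have huv : u ≠ v := by
          intro h
          exact Finset.disjoint_left.1 (hDdisj _ hE₁ _ hE₂ hEne) hu (h ▸ hv)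
        -- show D₁ and D₂ lie in the same Q-block
        obtain ⟨q₁, hq₁, hD₁q⟩ := href D₁ hD₁
        obtain ⟨q₂, hq₂, hD₂q⟩ := href D₂ hD₂
        have hqeq : q₁ = q₂ := by
          by_contra hqne
          obtain ⟨⟨C₁, hC₁, hC₁q⟩, -⟩ := (hQmem q₁).1 hq₁
          obtain ⟨⟨C₂, hC₂, hC₂q⟩, -⟩ := (hQmem q₂).1 hq₂
          have hCne : C₁ ≠ C₂ := fun h => hqne (by rw [← hC₁q, ← hC₂q, h])
          obtain ⟨x, hx⟩ := hDne _ hD₁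
          obtain ⟨y, hy⟩ := hDne _ hD₂
          have hxC : x ∈ C₁ ∩ W := hC₁q ▸ hD₁q hx
          have hyC : y ∈ C₂ ∩ W := hC₂q ▸ hD₂q hy
          have hlt : dist u v < dist x y := by
            apply hmargin u (Finset.mem_inter.1 (hE₁sub hu)).2
              v (Finset.mem_inter.1 (hE₂sub hv)).2
              x (Finset.mem_inter.1 hxC).2 y (Finset.mem_inter.1 hyC).2 huv
            · exact ⟨C, hC, (Finset.mem_inter.1 (hE₁sub hu)).1,
                (Finset.mem_inter.1 (hE₂sub hv)).1⟩
            · exact ⟨C₁, hC₁, C₂, hC₂, hCne, (Finset.mem_inter.1 hxC).1,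
                (Finset.mem_inter.1 hyC).1⟩
          have h1 : dist x y ≤ clDist D₁ D₂ := dist_le_clDist hx hy
          have h2 : clDist D₁ D₂ ≤ clDist E₁ E₂ := hmin E₁ hE₁ E₂ hE₂ hEne
          rw [hcl] at h2
          linarith
        intro B hB
        rcases hmemNew B hB with rfl | ⟨hBD, -, -⟩
        · exact ⟨q₁, hq₁, Finset.union_subset hD₁q (hqeq ▸ hD₂q)⟩
        · exact href B hBD
  refine ⟨fun D hD hc => (main D hD).2 hc, fun D hD hc => ?_⟩
  exact refines_eq (main D hD).1 hQpart ((main D hD).2 hc.ge) hc.le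
end
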